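/- Let α > 0 and c ∈ (0, 1/2]. Then the privatization map I : ℝ → (ℝ → ℝ) defined by I(x₀)(x) := 1 + (e^α − 1)·1_{{x : g_c(x₀) ≤ x ≤ d_c(x₀)}}(x) is injective; equivalently, the map x₀ ↦ {x ∈ ℝ : g_c(x₀) ≤ x ≤ d_c(x₀)} is injective. -/
import Mathlib


open MeasureTheory

/-- The generalized inverse `g⁻¹(x) = sup {y ∈ ℝ : g(y) ≤ x}` in the extended reals
(`sup ∅ = ⊥ = -∞`). -/
noncomputable def ginv (g : ℝ → EReal) (x : ℝ) : EReal :=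
  sSup (Real.toEReal '' {y : ℝ | g y ≤ (x : EReal)})

/-- The generalized inverse `d⁻¹(x) = inf {y ∈ ℝ : d(y) ≥ x}` in the extended reals
(`inf ∅ = ⊤ = +∞`). -/
noncomputable def dinv (d : ℝ → EReal) (x : ℝ) : EReal :=
  sInf (Real.toEReal '' {y : ℝ | (x : EReal) ≤ d y})

/-- The cumulative distribution function `Ξ(x) = ∫_{-∞}^x ν`. -/
noncomputable def Xi (ν : ℝ → ℝ) (x : ℝ) : ℝ := ∫ y in Set.Iic x, ν y

/-- The left staircase boundary function `g_c`. -/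
noncomputable def gc (ν Ξinv : ℝ → ℝ) (c : ℝ) (x : ℝ) : EReal :=
  if x ≤ Ξinv c then ⊥ else ((Ξinv (Xi ν x - c / 2) : ℝ) : EReal)

/-- The right staircase boundary function `d_c`. -/
noncomputable def dc (ν Ξinv : ℝ → ℝ) (c : ℝ) (x : ℝ) : EReal :=
  if x < Ξinv (1 - c) then ((Ξinv (Xi ν x + c / 2) : ℝ) : EReal) else ⊤

theorem staircase_privatization_injective
    (α : ℝ) (hα : 0 < α)
    (ν : ℝ → ℝ) (hνc : Continuous ν) (hνpos : ∀ x, 0 < ν x)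
    (hνint : Integrable ν) (hν1 : ∫ x, ν x = 1)
    (Ξinv : ℝ → ℝ)
    (hΞ₁ : ∀ u ∈ Set.Ioo (0 : ℝ) 1, Xi ν (Ξinv u) = u)
    (hΞ₂ : ∀ x : ℝ, Ξinv (Xi ν x) = x)
    (c : ℝ) (hc0 : 0 < c) (hc2 : c ≤ 1 / 2) :
    Function.Injective (fun x₀ : ℝ => (fun x : ℝ =>
      1 + (Real.exp α - 1) *
        Set.indicator {x : ℝ | gc ν Ξinv c x₀ ≤ (x : EReal) ∧ (x : EReal) ≤ dc ν Ξinv c x₀}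
          (fun _ => (1 : ℝ)) x)) ∧
    Function.Injective (fun x₀ : ℝ =>
      {x : ℝ | gc ν Ξinv c x₀ ≤ (x : EReal) ∧ (x : EReal) ≤ dc ν Ξinv c x₀}) := by
  have hXimono : Monotone (Xi ν) := by
    intro x y hxy
    exact setIntegral_mono_set hνint.integrableOn
      (Filter.Eventually.of_forall fun z => (hνpos z).le)
      (HasSubset.Subset.eventuallyLE (Set.Iic_subset_Iic.2 hxy))
  have hXi : StrictMono (Xi ν) :=
    hXimono.strictMono_of_injective (Function.LeftInverse.injective hΞ₂)
  have hXipos : ∀ x, 0 < Xi ν x := by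
    intro x
    rw [Xi, setIntegral_pos_iff_support_of_nonneg_ae
      (Filter.Eventually.of_forall fun z => (hνpos z).le) hνint.integrableOn]
    have hsupp : Function.support ν = Set.univ := Set.eq_univ_of_forall fun z => (hνpos z).ne'
    rw [hsupp, Set.univ_inter, Real.volume_Iic]
    exact ENNReal.zero_lt_top
  have hXile : ∀ x, Xi ν x ≤ 1 := by
    intro x
    rw [← hν1]
    exact setIntegral_le_integral hνint (Filter.Eventually.of_forall fun z => (hνpos z).le)
  have hXic : Xi ν (Ξinv c) = c := hΞ₁ c ⟨hc0, by linarith⟩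
  have hXi1c : Xi ν (Ξinv (1 - c)) = 1 - c := hΞ₁ (1 - c) ⟨by linarith, by linarith⟩
  have hinvlt : ∀ u v : ℝ, 0 < u → v < 1 → u < v → Ξinv u < Ξinv v := by
    intro u v hu hv huv
    have h1 : Xi ν (Ξinv u) = u := hΞ₁ u ⟨hu, by linarith⟩
    have h2 : Xi ν (Ξinv v) = v := hΞ₁ v ⟨by linarith, hv⟩
    exact hXi.lt_iff_lt.1 (by rw [h1, h2]; exact huv)
  have key : Function.Injective (fun x₀ : ℝ =>
      {x : ℝ | gc ν Ξinv c x₀ ≤ (x : EReal) ∧ (x : EReal) ≤ dc ν Ξinv c x₀}) := by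
    have main : ∀ a b : ℝ, a < b →
        {x : ℝ | gc ν Ξinv c a ≤ (x : EReal) ∧ (x : EReal) ≤ dc ν Ξinv c a} ≠
        {x : ℝ | gc ν Ξinv c b ≤ (x : EReal) ∧ (x : EReal) ≤ dc ν Ξinv c b} := by
      intro a b hab hset
      rw [Set.ext_iff] at hset
      simp only [Set.mem_setOf_eq] at hset
      by_cases hbc : b ≤ Ξinv c
      · -- both below the left threshold : bottoms are ⊥, compare tops
        have hac : a ≤ Ξinv c := hab.le.trans hbc
        have hga : gc ν Ξinv c a = ⊥ := by simp only [gc]; rw [if_pos hac]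
        have hgb : gc ν Ξinv c b = ⊥ := by simp only [gc]; rw [if_pos hbc]
        have hXia : Xi ν a ≤ c := by have := hXimono hac; rwa [hXic] at this
        have hXib : Xi ν b ≤ c := by have := hXimono hbc; rwa [hXic] at this
        by_cases ha1 : a < Ξinv (1 - c)
        · have hda : dc ν Ξinv c a = ((Ξinv (Xi ν a + c / 2) : ℝ) : EReal) := by
            simp only [dc]; rw [if_pos ha1]
          by_cases hb1 : b < Ξinv (1 - c)
          · have hdb : dc ν Ξinv c b = ((Ξinv (Xi ν b + c / 2) : ℝ) : EReal) := by
              simp only [dc]; rw [if_pos hb1]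
            have hlt : Ξinv (Xi ν a + c / 2) < Ξinv (Xi ν b + c / 2) :=
              hinvlt _ _ (by linarith [hXipos a]) (by linarith) (by linarith [hXi hab])
            have hmem := (hset (Ξinv (Xi ν b + c / 2))).2 ⟨hgb ▸ bot_le, hdb ▸ le_refl _⟩
            rw [hda] at hmem
            exact absurd (EReal.coe_le_coe_iff.1 hmem.2) (not_le.2 hlt)
          · have hdb : dc ν Ξinv c b = ⊤ := by simp only [dc]; rw [if_neg hb1]
            have hmem := (hset (Ξinv (Xi ν a + c / 2) + 1)).2 ⟨hgb ▸ bot_le, hdb ▸ le_top⟩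
            rw [hda] at hmem
            have := EReal.coe_le_coe_iff.1 hmem.2
            linarith
        · -- Ξinv (1-c) ≤ a < b ≤ Ξinv c ≤ Ξinv (1-c) : contradiction
          have h1 : Ξinv c ≤ Ξinv (1 - c) := by
            rcases eq_or_lt_of_le (show c ≤ 1 - c by linarith) with h | h
            · exact le_of_eq (congrArg Ξinv h)
            · exact (hinvlt c (1 - c) hc0 (by linarith) h).le
          push_neg at ha1
          linarith
      · push_neg at hbc
        have hXibgt : c < Xi ν b := by have := hXi hbc; rwa [hXic] at this
        have hgb : gc ν Ξinv c b = ((Ξinv (Xi ν b - c / 2) : ℝ) : EReal) := by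
          simp only [gc]; rw [if_neg (not_le.2 hbc)]
        by_cases hac : a ≤ Ξinv c
        · -- a low, b high : take x far to the left
          have hga : gc ν Ξinv c a = ⊥ := by simp only [gc]; rw [if_pos hac]
          obtain ⟨x, hxa, hxr⟩ : ∃ x : ℝ, x < a ∧ x < Ξinv (Xi ν b - c / 2) :=
            ⟨min (Ξinv (Xi ν b - c / 2)) a - 1,
              by have := min_le_right (Ξinv (Xi ν b - c / 2)) a; linarith,
              by have := min_le_left (Ξinv (Xi ν b - c / 2)) a; linarith⟩
          have hxda : (x : EReal) ≤ dc ν Ξinv c a := by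
            by_cases ha1 : a < Ξinv (1 - c)
            · simp only [dc]; rw [if_pos ha1]
              refine EReal.coe_le_coe_iff.2 ?_
              have hXia : Xi ν a ≤ c := by have := hXimono hac; rwa [hXic] at this
              have hax : a < Ξinv (Xi ν a + c / 2) := by
                have := hinvlt (Xi ν a) (Xi ν a + c / 2) (hXipos a) (by linarith) (by linarith)
                rwa [hΞ₂ a] at this
              linarith
            · simp only [dc]; rw [if_neg ha1]; exact le_top
          have hmem := (hset x).1 ⟨hga ▸ bot_le, hxda⟩
          rw [hgb] at hmem
          exact absurd (EReal.coe_le_coe_iff.1 hmem.1) (not_le.2 hxr)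
        · -- both high : compare bottoms, take x = g_c(a)
          push_neg at hac
          have hXiagt : c < Xi ν a := by have := hXi hac; rwa [hXic] at this
          have hga : gc ν Ξinv c a = ((Ξinv (Xi ν a - c / 2) : ℝ) : EReal) := by
            simp only [gc]; rw [if_neg (not_le.2 hac)]
          have hxda : ((Ξinv (Xi ν a - c / 2) : ℝ) : EReal) ≤ dc ν Ξinv c a := by
            by_cases ha1 : a < Ξinv (1 - c)
            · simp only [dc]; rw [if_pos ha1]
              refine EReal.coe_le_coe_iff.2 ?_
              have hXia1 : Xi ν a < 1 - c := by have := hXi ha1; rwa [hXi1c] at this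
              exact (hinvlt _ _ (by linarith) (by linarith) (by linarith)).le
            · simp only [dc]; rw [if_neg ha1]; exact le_top
          have hmem := (hset (Ξinv (Xi ν a - c / 2))).1 ⟨hga ▸ le_refl _, hxda⟩
          rw [hgb] at hmem
          have hxlt : Ξinv (Xi ν a - c / 2) < Ξinv (Xi ν b - c / 2) :=
            hinvlt _ _ (by linarith) (by linarith [hXile b]) (by linarith [hXi hab])
          exact absurd (EReal.coe_le_coe_iff.1 hmem.1) (not_le.2 hxlt)
    intro a b hab
    by_contra hne
    rcases lt_trichotomy a b with h | h | h
    · exact main a b h hab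
    · exact hne h
    · exact main b a h hab.symm
  refine ⟨?_, key⟩
  intro a b h
  apply key
  have h1 : (1 : ℝ) < Real.exp α := by
    rw [← Real.exp_zero]; exact Real.exp_lt_exp.2 hα
  ext x
  have hx := congrFun h x
  simp only at hx
  have heq : Set.indicator {x : ℝ | gc ν Ξinv c a ≤ (x : EReal) ∧ (x : EReal) ≤ dc ν Ξinv c a}
      (fun _ => (1 : ℝ)) x =
      Set.indicator {x : ℝ | gc ν Ξinv c b ≤ (x : EReal) ∧ (x : EReal) ≤ dc ν Ξinv c b}
      (fun _ => (1 : ℝ)) x :=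
    mul_left_cancel₀ (by linarith : Real.exp α - 1 ≠ 0) (by linarith)
  simp only [Set.indicator_apply] at heq
  constructor
  · intro hm
    rw [if_pos hm] at heq
    by_contra hm2
    rw [if_neg hm2] at heq
    norm_num at heq
  · intro hm
    rw [if_pos hm] at heq
    by_contra hm2
    rw [if_neg hm2] at heq
    norm_num at heq
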